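/- (The variational operator produces semibasic forms; coordinate model.) Let λ be a 1-form of order k and define the variational operator 𝔼(λ) := ∑_{j=0}^{k} ((−1)^j / j!) · d_T^j(S^jλ), a 1-form of order 2k (each summand d_T^j(S^jλ) has order k+j and is regarded as a 1-form of order 2k). Then (𝔼λ)(A)_r = 0 for every A ∈ J_{2k} and every r ≥ 1; equivalently S(𝔼λ) = 0, i.e. 𝔼λ is semibasic of order 0. -/

import Mathlib

noncomputable section

/-- Partial Fréchet derivative in slot `r` of a map defined on `Fin m → E`,
as a continuous linear map (zero junk value for `r ≥ m`). -/
def pd {m : ℕ} {E W : Type*} [NormedAddCommGroup E] [NormedSpace ℝ E]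
    [NormedAddCommGroup W] [NormedSpace ℝ W]
    (F : (Fin m → E) → W) (r : ℕ) (A : Fin m → E) : E →L[ℝ] W :=
  if h : r < m then
    (fderiv ℝ F A).comp
      (ContinuousLinearMap.pi (Pi.single (⟨r, h⟩ : Fin m) (ContinuousLinearMap.id ℝ E)))
  else 0

/-- The space of `k`-jets `J_k = (ℝ^n)^{k+1}`, slots indexed `0,…,k`. -/
abbrev Jet (n k : ℕ) := Fin (k + 1) → EuclideanSpace ℝ (Fin n)

/-- A `1`-form of order `k` in the coordinate model: a map from `J_k` to the
`(k+1)`-tuples of linear functionals on `ℝ^n`. -/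
abbrev OneForm (n k : ℕ) := Jet n k → Fin (k + 1) → (EuclideanSpace ℝ (Fin n) →L[ℝ] ℝ)

/-- Truncation of a jet to lower order. -/
def trunc {n k m : ℕ} (h : m ≤ k) (A : Jet n k) : Jet n m := fun i => A ⟨i, by omega⟩

/-- The `r`-th component of a 1-form at a jet, with the convention that components of
index `> k` are zero. -/
def comp' {n k : ℕ} (lam : OneForm n k) (A : Jet n k) (r : ℕ) :
    EuclideanSpace ℝ (Fin n) →L[ℝ] ℝ :=
  if h : r < k + 1 then lam A ⟨r, h⟩ else 0

/-- The `r`-th component at a (possibly higher-order) jet of a 1-form of order `m`,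
regarded as a 1-form of any order `k ≥ m` by precomposing with truncation. -/
def compAt {n k m : ℕ} (lam : OneForm n m) (A : Jet n k) (r : ℕ) :
    EuclideanSpace ℝ (Fin n) →L[ℝ] ℝ :=
  if h : m ≤ k then comp' lam (trunc h A) r else 0

/-- The vertical endomorphism: `(Sλ)(A)_r = (r+1) ⬝ λ(A)_{r+1}`. -/
def VS {n k : ℕ} (lam : OneForm n k) : OneForm n k :=
  fun A r => (((r : ℕ) + 1 : ℕ) : ℝ) • comp' lam A ((r : ℕ) + 1)

/-- The total time derivative of a map `F : J_k → W`:
`D_T F (A) = ∑_{j=0}^{k} ∂_j F(Ā)(A_{j+1})`. -/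
def DT {n k : ℕ} {W : Type*} [NormedAddCommGroup W] [NormedSpace ℝ W]
    (F : Jet n k → W) (A : Jet n (k + 1)) : W :=
  ∑ j : Fin (k + 1), pd F j (trunc (Nat.le_succ k) A) (A j.succ)

/-- The total time derivative of a 1-form of order `k`:
`(d_Tλ)(A)_r = D_T(λ_{(r)})(A) + λ(Ā)_{r-1}`, with `λ(Ā)_{-1} := 0`. -/
def dT {n k : ℕ} (lam : OneForm n k) : OneForm n (k + 1) :=
  fun A r =>
    DT (fun B => comp' lam B r) A +
      match (r : ℕ) with
      | 0 => 0
      | (s + 1) => comp' lam (trunc (Nat.le_succ k) A) s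

/-- Iterated total time derivative of a 1-form. -/
def dTiter {n k : ℕ} : (j : ℕ) → OneForm n k → OneForm n (k + j)
  | 0, lam => lam
  | (j + 1), lam => dT (dTiter j lam)

end

noncomputable section

/-- The variational operator `𝔼(λ) = ∑_{j=0}^{k} ((−1)^j/j!) d_T^j(S^jλ)`, a 1-form of
order `2k` (each summand `d_T^j(S^jλ)` has order `k+j` and is regarded as a 1-form of
order `2k` via truncation). -/
def Evar {n k : ℕ} (lam : OneForm n k) : OneForm n (2 * k) :=
  fun A r => ∑ j ∈ Finset.range (k + 1),
    ((-1 : ℝ) ^ j / (j.factorial : ℝ)) • compAt (dTiter j (VS^[j] lam)) A r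

/-! The total time derivative and the vertical endomorphism satisfy `S d_T = d_T S + id`, where
`id` regards a form of order `m` as one of order `m + 1`; iterating gives
`S d_T^{j+1} = d_T^{j+1} S + (j+1) d_T^j`. Hence, with `g_j := ((-1)^j / j!) d_T^j S^{j+1} λ`,
the `j`-th summand of `S 𝔼λ` is `g_j - g_{j-1}`, so `S 𝔼λ = g_k`, which vanishes because
`S^{k+1}` kills forms of order `k`. -/

section TotalDerivative

variable {n k m p q : ℕ} {W : Type*} [NormedAddCommGroup W] [NormedSpace ℝ W]

def truncL (n : ℕ) (h : m ≤ k) : Jet n k →L[ℝ] Jet n m :=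
  ContinuousLinearMap.pi fun i => ContinuousLinearMap.proj ⟨i, by omega⟩

theorem coe_truncL (h : m ≤ k) : ⇑(truncL n h) = trunc h := rfl

theorem contDiff_trunc (h : m ≤ k) : ContDiff ℝ (⊤ : ℕ∞) (trunc (n := n) h) :=
  (truncL n h).contDiff

theorem pd_apply {E : Type*} [NormedAddCommGroup E] [NormedSpace ℝ E]
    (F : (Fin m → E) → W) (j : Fin m) (B : Fin m → E) (v : E) :
    pd F j B v = fderiv ℝ F B (Pi.single j v) := by
  rw [pd, dif_pos j.isLt, ContinuousLinearMap.comp_apply]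
  congr 1
  ext i
  rcases eq_or_ne i j with rfl | hij <;> simp [*]

theorem DT_eq_fderiv (F : Jet n k → W) (A : Jet n (k + 1)) :
    DT F A = fderiv ℝ F (Fin.init A) (Fin.tail A) := by
  simp only [DT, pd_apply, ← map_sum]
  congr 1
  exact Finset.univ_sum_single (Fin.tail A)

theorem DT_const (c : W) (A : Jet n (k + 1)) : DT (fun _ => c) A = 0 := by
  simp [DT_eq_fderiv]

theorem DT_add {F G : Jet n k → W} (hF : Differentiable ℝ F) (hG : Differentiable ℝ G)
    (A : Jet n (k + 1)) : DT (fun B => F B + G B) A = DT F A + DT G A := by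
  simp [DT_eq_fderiv, fderiv_fun_add (hF _) (hG _)]

theorem DT_smul {F : Jet n k → W} (hF : Differentiable ℝ F) (c : ℝ) (A : Jet n (k + 1)) :
    DT (fun B => c • F B) A = c • DT F A := by
  simp [DT_eq_fderiv, fderiv_fun_const_smul (hF _) c]

theorem DT_comp_trunc (h : p ≤ q) {F : Jet n p → W} (hF : Differentiable ℝ F)
    (A : Jet n (q + 1)) :
    DT (fun B => F (trunc h B)) A = DT F (trunc (Nat.succ_le_succ h) A) := by
  simp only [DT_eq_fderiv]
  rw [← coe_truncL, fderiv_fun_comp _ (hF _) (truncL n h).differentiableAt, (truncL n h).fderiv]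
  rfl

theorem ContDiff.DT {F : Jet n k → W} (hF : ContDiff ℝ (⊤ : ℕ∞) F) :
    ContDiff ℝ (⊤ : ℕ∞) (DT F) := by
  simp only [funext (DT_eq_fderiv F)]
  have hinit : ContDiff ℝ (⊤ : ℕ∞) (Fin.init : Jet n (k + 1) → Jet n k) :=
    contDiff_trunc (Nat.le_succ k)
  have htail : ContDiff ℝ (⊤ : ℕ∞) (Fin.tail : Jet n (k + 1) → Jet n k) :=
    contDiff_pi.2 fun i => contDiff_apply ℝ _ i.succ
  exact ((hF.fderiv_right (by simp)).comp hinit).clm_apply htail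

end TotalDerivative

section Components

variable {n k m : ℕ}

theorem comp'_of_lt {μ : OneForm n k} {A : Jet n k} {r : ℕ} (h : r < k + 1) :
    comp' μ A r = μ A ⟨r, h⟩ :=
  dif_pos h

theorem comp'_eq_zero_of_lt {μ : OneForm n k} {A : Jet n k} {r : ℕ} (h : k < r) :
    comp' μ A r = 0 :=
  dif_neg (by omega)

theorem OneForm.ext_comp' {μ ν : OneForm n k} (h : ∀ A r, comp' μ A r = comp' ν A r) :
    μ = ν := by
  funext A r
  simpa only [comp'_of_lt r.isLt] using h A r

@[simp]
theorem comp'_zero (A : Jet n k) (r : ℕ) : comp' (0 : OneForm n k) A r = 0 := by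
  unfold comp'; split_ifs <;> rfl

@[simp]
theorem comp'_add (μ ν : OneForm n k) (A : Jet n k) (r : ℕ) :
    comp' (μ + ν) A r = comp' μ A r + comp' ν A r := by
  unfold comp'; split_ifs <;> simp

@[simp]
theorem comp'_smul (c : ℝ) (μ : OneForm n k) (A : Jet n k) (r : ℕ) :
    comp' (c • μ) A r = c • comp' μ A r := by
  unfold comp'; split_ifs <;> simp

theorem comp'_VS (μ : OneForm n k) (A : Jet n k) (r : ℕ) :
    comp' (VS μ) A r = ((r + 1 : ℕ) : ℝ) • comp' μ A (r + 1) := by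
  by_cases h : r < k + 1
  · rw [comp'_of_lt h]; rfl
  · rw [comp'_eq_zero_of_lt (by omega), comp'_eq_zero_of_lt (by omega), smul_zero]

theorem comp'_dT_zero (μ : OneForm n k) (A : Jet n (k + 1)) :
    comp' (dT μ) A 0 = DT (fun B => comp' μ B 0) A :=
  (comp'_of_lt (by omega)).trans (add_zero _)

theorem comp'_dT_succ (μ : OneForm n k) (A : Jet n (k + 1)) (s : ℕ) :
    comp' (dT μ) A (s + 1) =
      DT (fun B => comp' μ B (s + 1)) A + comp' μ (trunc (Nat.le_succ k) A) s := by
  by_cases h : s + 1 < k + 2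
  · rw [comp'_of_lt h]; rfl
  · have hvanish : (fun B : Jet n k => comp' μ B (s + 1)) = fun _ => 0 :=
      funext fun B => comp'_eq_zero_of_lt (by omega)
    rw [comp'_eq_zero_of_lt (by omega), hvanish, DT_const, comp'_eq_zero_of_lt (by omega),
      add_zero]

def raiseOrder (μ : OneForm n m) : OneForm n (m + 1) :=
  fun A r => comp' μ (trunc (Nat.le_succ m) A) r

theorem comp'_raiseOrder (μ : OneForm n m) (A : Jet n (m + 1)) (r : ℕ) :
    comp' (raiseOrder μ) A r = comp' μ (trunc (Nat.le_succ m) A) r := by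
  by_cases h : r < m + 2
  · rw [comp'_of_lt h]; rfl
  · rw [comp'_eq_zero_of_lt (by omega), comp'_eq_zero_of_lt (by omega)]

theorem contDiff_iff_comp' {μ : OneForm n k} :
    ContDiff ℝ (⊤ : ℕ∞) μ ↔ ∀ r : ℕ, ContDiff ℝ (⊤ : ℕ∞) (fun B => comp' μ B r) := by
  refine ⟨fun hμ r => ?_, fun h => contDiff_pi.2 fun r => ?_⟩
  · unfold comp'
    split_ifs
    exacts [contDiff_pi.1 hμ _, contDiff_const]
  · simpa only [comp'_of_lt r.isLt] using h r

theorem ContDiff.differentiable_comp' {μ : OneForm n k} (hμ : ContDiff ℝ (⊤ : ℕ∞) μ)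
    (r : ℕ) : Differentiable ℝ (fun B => comp' μ B r) :=
  (contDiff_iff_comp'.1 hμ r).differentiable (by simp)

theorem ContDiff.vs {μ : OneForm n k} (hμ : ContDiff ℝ (⊤ : ℕ∞) μ) :
    ContDiff ℝ (⊤ : ℕ∞) (VS μ) :=
  contDiff_iff_comp'.2 fun r => by
    simpa only [comp'_VS] using (contDiff_iff_comp'.1 hμ (r + 1)).const_smul _

theorem ContDiff.vs_iterate {μ : OneForm n k} (hμ : ContDiff ℝ (⊤ : ℕ∞) μ) (j : ℕ) :
    ContDiff ℝ (⊤ : ℕ∞) (VS^[j] μ) := by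
  induction j with
  | zero => exact hμ
  | succ j ih => rw [Function.iterate_succ_apply']; exact ih.vs

theorem ContDiff.raiseOrder {μ : OneForm n m} (hμ : ContDiff ℝ (⊤ : ℕ∞) μ) :
    ContDiff ℝ (⊤ : ℕ∞) (raiseOrder μ) :=
  contDiff_iff_comp'.2 fun r => by
    simpa only [comp'_raiseOrder, Function.comp_def] using (contDiff_iff_comp'.1 hμ r).comp (contDiff_trunc _)

theorem ContDiff.dT {μ : OneForm n k} (hμ : ContDiff ℝ (⊤ : ℕ∞) μ) :
    ContDiff ℝ (⊤ : ℕ∞) (dT μ) := by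
  refine contDiff_iff_comp'.2 fun r => ?_
  cases r with
  | zero => simpa only [comp'_dT_zero] using (contDiff_iff_comp'.1 hμ 0).DT
  | succ s =>
    simpa only [comp'_dT_succ, Function.comp_def] using (contDiff_iff_comp'.1 hμ (s + 1)).DT.add
      ((contDiff_iff_comp'.1 hμ s).comp (contDiff_trunc _))

theorem ContDiff.dTiter {μ : OneForm n k} (hμ : ContDiff ℝ (⊤ : ℕ∞) μ) (j : ℕ) :
    ContDiff ℝ (⊤ : ℕ∞) (dTiter j μ) := by
  induction j with
  | zero => exact hμ
  | succ j ih => exact ih.dT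

end Components

section Commutation

variable {n k m : ℕ}

theorem dT_add {μ ν : OneForm n k} (hμ : ContDiff ℝ (⊤ : ℕ∞) μ) (hν : ContDiff ℝ (⊤ : ℕ∞) ν) :
    dT (μ + ν) = dT μ + dT ν := by
  refine OneForm.ext_comp' fun A r => ?_
  cases r with
  | zero =>
    simp only [comp'_add, comp'_dT_zero,
      DT_add (hμ.differentiable_comp' 0) (hν.differentiable_comp' 0)]
  | succ s =>
    simp only [comp'_add, comp'_dT_succ,
      DT_add (hμ.differentiable_comp' (s + 1)) (hν.differentiable_comp' (s + 1))]
    abel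

theorem dT_smul {μ : OneForm n k} (hμ : ContDiff ℝ (⊤ : ℕ∞) μ) (c : ℝ) :
    dT (c • μ) = c • dT μ := by
  refine OneForm.ext_comp' fun A r => ?_
  cases r with
  | zero => simp only [comp'_smul, comp'_dT_zero, DT_smul (hμ.differentiable_comp' 0)]
  | succ s =>
    simp only [comp'_smul, comp'_dT_succ, DT_smul (hμ.differentiable_comp' (s + 1)), smul_add]

theorem dT_raiseOrder {μ : OneForm n m} (hμ : ContDiff ℝ (⊤ : ℕ∞) μ) :
    dT (raiseOrder μ) = raiseOrder (dT μ) := by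
  refine OneForm.ext_comp' fun A r => ?_
  cases r with
  | zero =>
    simp only [comp'_raiseOrder, comp'_dT_zero, DT_comp_trunc _ (hμ.differentiable_comp' 0)]
  | succ s =>
    simp only [comp'_raiseOrder, comp'_dT_succ,
      DT_comp_trunc _ (hμ.differentiable_comp' (s + 1))]

@[simp]
theorem dT_zero : dT (0 : OneForm n k) = 0 :=
  OneForm.ext_comp' fun A r => by
    cases r <;> simp [comp'_dT_zero, comp'_dT_succ, DT_const]

@[simp]
theorem dTiter_zero (j : ℕ) : dTiter j (0 : OneForm n k) = 0 := by
  induction j with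
  | zero => rfl
  | succ j ih => exact (congrArg dT ih).trans dT_zero

theorem VS_iterate_eq_zero (μ : OneForm n k) {j : ℕ} (hj : k < j) : VS^[j] μ = 0 := by
  have hvanish : ∀ j s (B : Jet n k), k < s + j → comp' (VS^[j] μ) B s = 0 := by
    intro j
    induction j with
    | zero => exact fun s B hs => comp'_eq_zero_of_lt hs
    | succ j ih =>
      intro s B hs
      rw [Function.iterate_succ_apply', comp'_VS, ih (s + 1) B (by omega), smul_zero]
  exact OneForm.ext_comp' fun B s => by rw [hvanish j s B (by omega), comp'_zero]

theorem VS_dT {μ : OneForm n k} (hμ : ContDiff ℝ (⊤ : ℕ∞) μ) :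
    VS (dT μ) = dT (VS μ) + raiseOrder μ := by
  refine OneForm.ext_comp' fun A r => ?_
  have hVS : ∀ t : ℕ, (fun B => comp' (VS μ) B t) = fun B => ((t + 1 : ℕ) : ℝ) • comp' μ B (t + 1) :=
    fun t => funext fun B => comp'_VS μ B t
  simp only [comp'_add, comp'_raiseOrder, comp'_VS, comp'_dT_succ]
  cases r with
  | zero =>
    rw [comp'_dT_zero, hVS, DT_smul (hμ.differentiable_comp' 1)]
    push_cast
    module
  | succ s =>
    rw [comp'_dT_succ, hVS, DT_smul (hμ.differentiable_comp' (s + 2)), comp'_VS]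
    push_cast
    module

theorem VS_dTiter_succ {μ : OneForm n k} (hμ : ContDiff ℝ (⊤ : ℕ∞) μ) (j : ℕ) :
    VS (dTiter (j + 1) μ) = dTiter (j + 1) (VS μ) + ((j + 1 : ℕ) : ℝ) • raiseOrder (dTiter j μ) := by
  induction j with
  | zero => simpa [dTiter] using VS_dT hμ
  | succ j ih =>
    calc VS (dT (dTiter (j + 1) μ))
        = dT (VS (dTiter (j + 1) μ)) + raiseOrder (dTiter (j + 1) μ) := VS_dT (hμ.dTiter (j + 1))
      _ = dT (dTiter (j + 1) (VS μ)) + ((j + 1 : ℕ) : ℝ) • raiseOrder (dT (dTiter j μ))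
            + raiseOrder (dT (dTiter j μ)) := by
          rw [ih, dT_add (hμ.vs.dTiter _) ((hμ.dTiter j).raiseOrder.const_smul ((j + 1 : ℕ) : ℝ)),
            dT_smul (hμ.dTiter j).raiseOrder, dT_raiseOrder (hμ.dTiter j)]
          rfl
      _ = dT (dTiter (j + 1) (VS μ)) + ((j + 2 : ℕ) : ℝ) • raiseOrder (dT (dTiter j μ)) := by
          push_cast
          module

end Commutation

section VariationalOperator

variable {n k m : ℕ}

theorem compAt_of_le {μ : OneForm n m} {A : Jet n k} (h : m ≤ k) (r : ℕ) :
    compAt μ A r = comp' μ (trunc h A) r :=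
  dif_pos h

@[simp]
theorem compAt_zero (A : Jet n k) (r : ℕ) : compAt (0 : OneForm n m) A r = 0 := by
  unfold compAt; split_ifs <;> simp

@[simp]
theorem compAt_add (μ ν : OneForm n m) (A : Jet n k) (r : ℕ) :
    compAt (μ + ν) A r = compAt μ A r + compAt ν A r := by
  unfold compAt; split_ifs <;> simp

@[simp]
theorem compAt_smul (c : ℝ) (μ : OneForm n m) (A : Jet n k) (r : ℕ) :
    compAt (c • μ) A r = c • compAt μ A r := by
  unfold compAt; split_ifs <;> simp

theorem compAt_VS (μ : OneForm n m) (A : Jet n k) (r : ℕ) :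
    compAt (VS μ) A r = ((r + 1 : ℕ) : ℝ) • compAt μ A (r + 1) := by
  unfold compAt; split_ifs <;> simp [comp'_VS]

theorem compAt_raiseOrder (μ : OneForm n m) {A : Jet n k} (h : m + 1 ≤ k) (r : ℕ) :
    compAt (raiseOrder μ) A r = compAt μ A r := by
  rw [compAt_of_le h, compAt_of_le (by omega), comp'_raiseOrder]
  rfl

def evarCoeff (j : ℕ) : ℝ := (-1) ^ j / j.factorial

theorem evarCoeff_succ_mul (j : ℕ) : evarCoeff (j + 1) * ((j + 1 : ℕ) : ℝ) = -evarCoeff j := by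
  rw [evarCoeff, evarCoeff, pow_succ, Nat.factorial_succ]
  push_cast
  field_simp

theorem comp'_Evar (lam : OneForm n k) (A : Jet n (2 * k)) (r : ℕ) :
    comp' (Evar lam) A r =
      ∑ j ∈ Finset.range (k + 1), evarCoeff j • compAt (dTiter j (VS^[j] lam)) A r := by
  by_cases h : r < 2 * k + 1
  · rw [comp'_of_lt h]; rfl
  · rw [comp'_eq_zero_of_lt (by omega)]
    refine (Finset.sum_eq_zero fun j hj => ?_).symm
    have hle : j ≤ k := Nat.lt_succ_iff.mp (Finset.mem_range.mp hj)
    rw [compAt_of_le (by omega : k + j ≤ 2 * k), comp'_eq_zero_of_lt (by omega), smul_zero]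

theorem smul_comp'_Evar_succ (lam : OneForm n k) (hlam : ContDiff ℝ (⊤ : ℕ∞) lam)
    (A : Jet n (2 * k)) (s : ℕ) :
    ((s + 1 : ℕ) : ℝ) • comp' (Evar lam) A (s + 1) = 0 := by
  set g : ℕ → (EuclideanSpace ℝ (Fin n) →L[ℝ] ℝ) :=
    fun j => evarCoeff j • compAt (dTiter j (VS^[j + 1] lam)) A s with hg
  have hsum : ((s + 1 : ℕ) : ℝ) • comp' (Evar lam) A (s + 1) =
      ∑ j ∈ Finset.range (k + 1), evarCoeff j • compAt (VS (dTiter j (VS^[j] lam))) A s := by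
    simp only [comp'_Evar, Finset.smul_sum, compAt_VS, smul_comm (((s + 1 : ℕ) : ℝ))]
  have hterm : ∀ j ∈ Finset.range k, evarCoeff (j + 1) •
      compAt (VS (dTiter (j + 1) (VS^[j + 1] lam))) A s = g (j + 1) - g j := by
    intro j hj
    have hle : k + (j + 1) ≤ 2 * k := by have := Finset.mem_range.mp hj; omega
    rw [VS_dTiter_succ (hlam.vs_iterate _), compAt_add, compAt_smul, compAt_raiseOrder _ hle,
      smul_add, smul_smul, evarCoeff_succ_mul, ← Function.iterate_succ_apply' VS, hg]
    module
  have hg0 : evarCoeff 0 • compAt (VS (dTiter 0 (VS^[0] lam))) A s = g 0 := rfl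
  have hgk : g k = 0 := by
    simp only [hg, VS_iterate_eq_zero lam (Nat.lt_succ_self k), dTiter_zero, compAt_zero,
      smul_zero]
  rw [hsum, Finset.sum_range_succ', Finset.sum_congr rfl hterm, Finset.sum_range_sub, hg0, hgk]
  abel

end VariationalOperator

theorem variational_operator_semibasic_general (n k : ℕ)
    (lam : OneForm n k) (hlam : ContDiff ℝ (⊤ : ℕ∞) lam) :
    (∀ (A : Jet n (2 * k)) (r : ℕ), 1 ≤ r → comp' (Evar lam) A r = 0) ∧
      (VS (Evar lam) = fun _ _ => 0) := by
  refine ⟨fun A r hr => ?_, funext₂ fun A i => smul_comp'_Evar_succ lam hlam A i⟩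
  obtain ⟨s, rfl⟩ := Nat.exists_eq_add_of_le' hr
  exact (smul_eq_zero.1 (smul_comp'_Evar_succ lam hlam A s)).resolve_left
    (Nat.cast_ne_zero.2 s.succ_ne_zero)

/-- **The variational operator produces semibasic forms** (coordinate model): for a
smooth 1-form `λ` of order `k`, all components of `𝔼λ` of index `≥ 1` vanish;
equivalently `S(𝔼λ) = 0`, i.e. `𝔼λ` is semibasic of order `0`. -/
theorem variational_operator_semibasic (n k : ℕ) (hn : 1 ≤ n)
    (lam : OneForm n k) (hlam : ContDiff ℝ (⊤ : ℕ∞) lam) :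
    (∀ (A : Jet n (2 * k)) (r : ℕ), 1 ≤ r → comp' (Evar lam) A r = 0) ∧
      (VS (Evar lam) = fun _ _ => 0) :=
  variational_operator_semibasic_general n k lam hlam

end
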